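/- For every bounded measurable function a : [0,1]×ℝ → ℝ, the series ∑_{n=1}^∞ ‖a^{⊗n} ϱ_n‖_{L²([0,1]^n × ℝ^n)}² converges, where a^{⊗n}(t,x) := a(t_1,x_1) ⋯ a(t_n,x_n). In particular, for every β ≥ 0, ∑_{n=1}^∞ β^{2n} ‖ϱ_n‖_{L²}² < ∞. -/

import Mathlib

open MeasureTheory ProbabilityTheory Filter Topology

noncomputable section

open Classical in
/-- Real-valued indicator of a proposition. -/
def indi (p : Prop) : ℝ := if p then 1 else 0

/-- The previous value `t (j-1)`, with the convention `t 0 = 0` (zero for the first index). -/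
def prev {α : Type*} [Zero α] {n : ℕ} (t : Fin n → α) (j : Fin n) : α :=
  if _h : j.1 = 0 then 0 else t ⟨j.1 - 1, Nat.lt_of_le_of_lt (Nat.sub_le _ _) j.2⟩

/-- `S` is a simple symmetric random walk on `ℤ` under `P`: `S n = ξ 1 + ⋯ + ξ n` for an
i.i.d. family `ξ` of Rademacher (±1, probability 1/2 each) steps. -/
def IsSSRW {Ω : Type*} [MeasurableSpace Ω] (P : Measure Ω) (S : ℕ → Ω → ℤ) : Prop :=
  ∃ ξ : ℕ → Ω → ℤ,
    iIndepFun ξ P ∧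
    (∀ i, Measurable (ξ i)) ∧
    (∀ i, P {a | ξ i a = 1} = 1/2 ∧ P {a | ξ i a = -1} = 1/2) ∧
    (∀ n a, S n a = ∑ i ∈ Finset.Icc 1 n, ξ i a)

/-- `ω` is an i.i.d. field of Rademacher random variables indexed by `ℕ × ℤ` under `P`. -/
def IsRademacher {Ω : Type*} [MeasurableSpace Ω] (P : Measure Ω) (ω : ℕ × ℤ → Ω → ℝ) : Prop :=
  iIndepFun ω P ∧
  (∀ p, Measurable (ω p)) ∧
  (∀ p, P {a | ω p a = 1} = 1/2 ∧ P {a | ω p a = -1} = 1/2)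

/-- The partition function `𝔷_N(A) = E[∏_{n=1}^N (1 + A(n,S_n) ω(n,S_n)) | ω]`,
the conditional expectation being taken with respect to the σ-algebra generated by `ω`. -/
def partitionFn {Ω : Type*} [MeasurableSpace Ω] (P : Measure Ω)
    (S : ℕ → Ω → ℤ) (ω : ℕ × ℤ → Ω → ℝ) (N : ℕ) (A : ℕ × ℤ → ℝ) : Ω → ℝ :=
  P[fun a => ∏ n ∈ Finset.Icc 1 N, (1 + A (n, S n a) * ω (n, S n a) a) |
    MeasurableSpace.comap (fun a => fun p => ω p a) inferInstance]

/-- The time coordinate `i` of `[t,x]_N`: the unique `i` with `t ∈ ((i-1)/N, i/N]`. -/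
def gridTime (N : ℕ) (t : ℝ) : ℕ := ⌈(N : ℝ) * t⌉₊

/-- The space coordinate `z` of `[t,x]_N`: the unique `z` of the same parity as the time
coordinate `i` with `x ∈ ((z-1)/√N, (z+1)/√N]`. -/
def gridSpace (N : ℕ) (t x : ℝ) : ℤ :=
  (gridTime N t : ℤ) + 2 * ⌈(Real.sqrt N * x - 1 - ((gridTime N t : ℤ) : ℝ)) / 2⌉

/-- The standard Gaussian heat kernel `ϱ(t,x) = e^{-x²/(2t)} / √(2πt)`. -/
def heatK (t x : ℝ) : ℝ := Real.exp (-(x ^ 2) / (2 * t)) / Real.sqrt (2 * Real.pi * t)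

/-- `ϱ_n(t,x) = ∏_j ϱ(t_j - t_{j-1}, x_j - x_{j-1})` on the simplex `Δ_n × ℝ^n`,
zero outside. -/
def rhoN (n : ℕ) (q : (Fin n → ℝ) × (Fin n → ℝ)) : ℝ :=
  indi ((∀ j, 0 < q.1 j ∧ q.1 j ≤ 1) ∧ StrictMono q.1) *
    ∏ j, heatK (q.1 j - prev q.1 j) (q.2 j - prev q.2 j)

/-- The average of `g` over the rectangle `((i-1)/N, i/N] × ((z-1)/√N, (z+1)/√N]`
(coordinatewise), whose Lebesgue measure is `2^n N^{-3n/2}`; this is the value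
`ḡ_N(i/N, z/√N)`. -/
def rectAvg (n : ℕ) (g : (Fin n → ℝ) × (Fin n → ℝ) → ℝ) (N : ℕ)
    (i : Fin n → ℕ) (z : Fin n → ℤ) : ℝ :=
  ((N : ℝ) ^ ((3 * (n : ℝ)) / 2) / 2 ^ n) *
    ∫ q in (Set.univ.pi fun j => Set.Ioc (((i j : ℝ) - 1) / N) ((i j : ℝ) / N)) ×ˢ
        (Set.univ.pi fun j =>
          Set.Ioc (((z j : ℝ) - 1) / Real.sqrt N) (((z j : ℝ) + 1) / Real.sqrt N)),
      g q

/-- The weighted U-statistic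
`S^N_n(g) = 2^{n/2} ∑_{i ∈ E^N_n} ∑_{z ∈ ℤ^n, i ↔ z} ḡ_N(i/N, z/√N) A(i,z) ω(i,z)`. -/
def Ustat {Ω : Type*} (ω : ℕ × ℤ → Ω → ℝ) (A : ℕ × ℤ → ℝ) (n N : ℕ)
    (g : (Fin n → ℝ) × (Fin n → ℝ) → ℝ) (a : Ω) : ℝ :=
  2 ^ ((n : ℝ) / 2) *
    ∑' i : Fin n → ℕ, ∑' z : Fin n → ℤ,
      indi ((∀ j, 1 ≤ i j ∧ i j ≤ N) ∧ Function.Injective i ∧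
            ∀ j, (i j : ℤ) % 2 = z j % 2) *
        (rectAvg n g N i z * (∏ j, A (i j, z j)) * ∏ j, ω (i j, z j) a)

/-- Order-1 rectangle average: the value `ḡ_N(i/N, z/√N)`. -/
def rectAvg1 (g : ℝ × ℝ → ℝ) (N : ℕ) (i : ℕ) (z : ℤ) : ℝ :=
  ((N : ℝ) ^ ((3 : ℝ) / 2) / 2) *
    ∫ q in Set.Ioc (((i : ℝ) - 1) / N) ((i : ℝ) / N) ×ˢ
        Set.Ioc (((z : ℝ) - 1) / Real.sqrt N) (((z : ℝ) + 1) / Real.sqrt N),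
      g q

/-- The order-1 U-statistic `S^N_1(g) = √2 ∑_{i=1}^N ∑_{z ≡ i (2)} ḡ_N(i/N,z/√N) A(i,z) ω(i,z)`. -/
def Ustat1 {Ω : Type*} (ω : ℕ × ℤ → Ω → ℝ) (A : ℕ × ℤ → ℝ) (N : ℕ)
    (g : ℝ × ℝ → ℝ) (a : Ω) : ℝ :=
  Real.sqrt 2 * ∑ i ∈ Finset.Icc 1 N, ∑' z : ℤ,
    indi ((i : ℤ) % 2 = z % 2) * (rectAvg1 g N i z * A (i, z) * ω (i, z) a)

/-- `p^N_n(t,x) = 2^{-n} p_n([t,x]_N) 1{⌈Nt⌉ ∈ D^N_n}`, built from the one-step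
transition probabilities `p` of the walk. -/
def pNn (p : ℕ → ℤ → ℝ) (n N : ℕ) (q : (Fin n → ℝ) × (Fin n → ℝ)) : ℝ :=
  (2 : ℝ)⁻¹ ^ n *
    indi ((∀ j, 1 ≤ gridTime N (q.1 j) ∧ gridTime N (q.1 j) ≤ N) ∧
          StrictMono fun j => gridTime N (q.1 j)) *
    ∏ j, p (gridTime N (q.1 j) - prev (fun j' => gridTime N (q.1 j')) j)
        (gridSpace N (q.1 j) (q.2 j) - prev (fun j' => gridSpace N (q.1 j') (q.2 j')) j)

end

/-!
Exponential tilting. On the simplex the time increments `sⱼ = tⱼ - tⱼ₋₁` sum to at most `1`,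
so for every `l > 0` we have `ϱₙ(t,x)² ≤ eˡ ∏ⱼ ϱ(sⱼ, yⱼ)² e^{-l sⱼ}`, where `yⱼ = xⱼ - xⱼ₋₁`.
Passing to increments is a unimodular linear change of variables, after which the right-hand
side factorises: `∫ ϱ(s,y)² dy = (4πs)^{-1/2}` and `∫₀^∞ e^{-ls} (4πs)^{-1/2} ds = (4l)^{-1/2}`.
Hence `‖ϱₙ‖₂² ≤ eˡ (4l)^{-n/2}`, and for `|a| ≤ C` the `n`-th term of the series is at most
`eˡ (C² / (2√l))ⁿ`, a convergent geometric series once `2√l > C²`.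
-/

open Real Set
open scoped ENNReal

/-- A junk value: `√(2πs) = 0` for `s ≤ 0`, and `x / 0 = 0`. -/
lemma heatK_of_nonpos {s : ℝ} (hs : s ≤ 0) (y : ℝ) : heatK s y = 0 := by
  rw [heatK, sqrt_eq_zero_of_nonpos (by nlinarith [pi_pos]), _root_.div_zero]

@[fun_prop]
lemma Measurable.heatK {α : Type*} [MeasurableSpace α] {f g : α → ℝ} (hf : Measurable f)
    (hg : Measurable g) : Measurable fun a => _root_.heatK (f a) (g a) := by
  unfold _root_.heatK; fun_prop

lemma heatK_sq {s : ℝ} (hs : 0 < s) (y : ℝ) :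
    heatK s y ^ 2 = exp (-(1 / s) * y ^ 2) / (2 * π * s) := by
  rw [heatK, div_pow, sq_sqrt (by positivity), sq, ← exp_add]
  congr 2
  field_simp
  ring

lemma integral_heatK_sq (s : ℝ) : ∫ y, heatK s y ^ 2 = 1 / (2 * √(π * s)) := by
  rcases le_or_gt s 0 with hs | hs
  · simp [heatK_of_nonpos hs, sqrt_eq_zero_of_nonpos (mul_nonpos_of_nonneg_of_nonpos pi_pos.le hs)]
  simp_rw [heatK_sq hs]
  rw [integral_div, integral_gaussian, show π / (1 / s) = π * s by field_simp]
  have h : √(π * s) ^ 2 = π * s := sq_sqrt (by positivity)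
  field_simp
  linear_combination h

lemma lintegral_heatK_sq (s : ℝ) :
    ∫⁻ y, ENNReal.ofReal (heatK s y ^ 2) = ENNReal.ofReal (1 / (2 * √(π * s))) := by
  rcases le_or_gt s 0 with hs | hs
  · simp [heatK_of_nonpos hs, sqrt_eq_zero_of_nonpos (mul_nonpos_of_nonneg_of_nonpos pi_pos.le hs)]
  rw [← integral_heatK_sq, ofReal_integral_eq_lintegral_ofReal]
  · simp_rw [heatK_sq hs]
    exact (integrable_exp_neg_mul_sq (by positivity)).div_const _
  · exact ae_of_all _ fun _ => sq_nonneg _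

lemma lintegral_inv_sqrt_mul_exp {l : ℝ} (hl : 0 < l) :
    ∫⁻ s, ENNReal.ofReal (1 / (2 * √(π * s))) * ENNReal.ofReal (exp (-(l * s)))
      = ENNReal.ofReal (1 / (2 * √l)) := by
  set g : ℝ → ℝ := fun s => (2 * √π)⁻¹ * (s ^ ((1 : ℝ) / 2 - 1) * exp (-(l * s)))
  have hg : ∀ s, ENNReal.ofReal (1 / (2 * √(π * s))) * ENNReal.ofReal (exp (-(l * s)))
      = (Ioi 0).indicator (fun s => ENNReal.ofReal (g s)) s := by
    intro s
    rcases le_or_gt s 0 with hs | hs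
    · rw [indicator_of_notMem (show s ∉ Ioi 0 from not_lt.2 hs),
        sqrt_eq_zero_of_nonpos (mul_nonpos_of_nonneg_of_nonpos pi_pos.le hs)]
      simp
    rw [indicator_of_mem (show s ∈ Ioi 0 from hs), ← ENNReal.ofReal_mul (by positivity)]
    simp only [g]
    rw [show (1 : ℝ) / 2 - 1 = -(1 / 2) by norm_num, rpow_neg hs.le, ← sqrt_eq_rpow,
      sqrt_mul pi_pos.le]
    field_simp
  have hint : IntegrableOn g (Ioi 0) := by
    have h := integrableOn_rpow_mul_exp_neg_mul_rpow (s := 1 / 2 - 1) (by norm_num) one_pos hl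
    simp only [Real.rpow_one, neg_mul] at h
    exact h.const_mul _
  rw [lintegral_congr hg, lintegral_indicator measurableSet_Ioi,
    ← ofReal_integral_eq_lintegral_ofReal hint
      ((ae_restrict_mem measurableSet_Ioi).mono fun s (hs : 0 < s) => by positivity)]
  rw [integral_const_mul, integral_rpow_mul_exp_neg_mul_Ioi (by norm_num) hl,
    Gamma_one_half_eq, ← sqrt_eq_rpow, one_div l, sqrt_inv]
  have := sqrt_pos.2 pi_pos
  field_simp

lemma prev_apply_of_ne_zero {α : Type*} [Zero α] {n : ℕ} (t : Fin n → α) {j : Fin n}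
    (hj : j.1 ≠ 0) : prev t j = t ⟨j.1 - 1, by omega⟩ := dif_neg hj

@[fun_prop]
lemma measurable_prev {α : Type*} [MeasurableSpace α] [Zero α] {n : ℕ} (j : Fin n) :
    Measurable fun t : Fin n → α => prev t j := by
  unfold prev; split <;> fun_prop

lemma prev_eq_cons {α : Type*} [Zero α] {n : ℕ} (t : Fin (n + 1) → α) :
    prev t = Fin.cons 0 (Fin.init t) := by
  funext j
  cases j using Fin.cases with
  | zero => rfl
  | succ j => exact prev_apply_of_ne_zero t (Nat.succ_ne_zero j)

lemma sum_sub_prev {n : ℕ} (t : Fin (n + 1) → ℝ) : ∑ j, (t j - prev t j) = t (Fin.last n) := by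
  rw [Finset.sum_sub_distrib, prev_eq_cons, Fin.sum_cons, Fin.sum_univ_castSucc]
  simp [Fin.init]

lemma sum_sub_prev_le_one {n : ℕ} {t : Fin n → ℝ} (ht : ∀ j, t j ≤ 1) :
    ∑ j, (t j - prev t j) ≤ 1 := by
  cases n with
  | zero => simp
  | succ n => exact (sum_sub_prev t).trans_le (ht _)

lemma measurePreserving_linearMap_of_det_eq_one {ι : Type*} [Fintype ι] [DecidableEq ι]
    (f : (ι → ℝ) →ₗ[ℝ] ι → ℝ) (hf : LinearMap.det f = 1) :
    MeasurePreserving f volume volume :=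
  ⟨(LinearMap.continuous_on_pi f).measurable, by
    rw [Real.map_linearMap_volume_pi_eq_smul_volume_pi (by simp [hf]), hf]; simp⟩

def subPrevₗ (n : ℕ) : (Fin n → ℝ) →ₗ[ℝ] Fin n → ℝ where
  toFun t j := t j - prev t j
  map_add' s t := by
    funext j; by_cases hj : j.1 = 0 <;> simp [prev, hj]; ring
  map_smul' c t := by
    funext j; by_cases hj : j.1 = 0 <;> simp [prev, hj, mul_sub]

lemma det_subPrevₗ (n : ℕ) : LinearMap.det (subPrevₗ n) = 1 := by
  classical
  rw [← LinearMap.det_toMatrix', Matrix.det_of_isLowerTriangular]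
  · refine Finset.prod_eq_one fun j _ => ?_
    by_cases hj : j.1 = 0
    · simp [subPrevₗ, prev, hj]
    · simp [subPrevₗ, prev_apply_of_ne_zero _ hj, Pi.single_apply, Fin.ext_iff]
      omega
  · intro i j (hij : i < j)
    by_cases hi : i.1 = 0
    · simp [subPrevₗ, prev, hi, hij.ne]
    · simp [subPrevₗ, prev_apply_of_ne_zero _ hi, Pi.single_apply, Fin.ext_iff, hij.ne]
      omega

lemma measurePreserving_subPrev (n : ℕ) :
    MeasurePreserving (fun t : Fin n → ℝ => fun j => t j - prev t j) volume volume :=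
  measurePreserving_linearMap_of_det_eq_one _ (det_subPrevₗ n)

lemma lintegral_fin_prod_eq_prod {α : Type*} [MeasurableSpace α] (μ : Measure α) [SigmaFinite μ]
    {n : ℕ} (f : Fin n → α → ℝ≥0∞) (hf : ∀ i, Measurable (f i)) :
    ∫⁻ x, ∏ i, f i (x i) ∂Measure.pi (fun _ => μ) = ∏ i, ∫⁻ u, f i u ∂μ := by
  induction n with
  | zero => simp
  | succ n ih =>
    have e := (measurePreserving_piFinSuccAbove (fun _ : Fin (n + 1) => μ) 0).symm
    rw [← e.lintegral_comp_emb (MeasurableEquiv.measurableEmbedding _)]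
    simp only [MeasurableEquiv.piFinSuccAbove_symm_apply, Fin.insertNthEquiv, Equiv.coe_fn_mk,
      Fin.insertNth_zero, Fin.prod_univ_succ, Fin.cons_zero, Fin.cons_succ, cast_eq]
    rw [lintegral_prod_mul (f := f 0) (g := fun x : Fin n → α => ∏ i, f i.succ (x i))
      (hf 0).aemeasurable
      (Finset.measurable_prod _ fun i _ => (hf i.succ).comp (measurable_pi_apply i)).aemeasurable,
      ih (fun i => f i.succ) (fun i => hf i.succ)]

lemma lintegral_prod_sub_prev {n : ℕ} (f : Fin n → ℝ → ℝ≥0∞) (hf : ∀ j, Measurable (f j)) :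
    ∫⁻ x : Fin n → ℝ, ∏ j, f j (x j - prev x j) = ∏ j, ∫⁻ y, f j y := by
  rw [← lintegral_fin_prod_eq_prod volume f hf]
  exact (measurePreserving_subPrev n).lintegral_comp
    (Finset.measurable_prod _ fun j _ => (hf j).comp (measurable_pi_apply j))

noncomputable def tiltedHeatKSq (l s y : ℝ) : ℝ≥0∞ :=
  ENNReal.ofReal (heatK s y ^ 2) * ENNReal.ofReal (exp (-(l * s)))

@[fun_prop]
lemma Measurable.tiltedHeatKSq {α : Type*} [MeasurableSpace α] (l : ℝ) {f g : α → ℝ}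
    (hf : Measurable f) (hg : Measurable g) :
    Measurable fun a => _root_.tiltedHeatKSq l (f a) (g a) := by
  unfold _root_.tiltedHeatKSq; fun_prop

lemma lintegral_tiltedHeatKSq (l s : ℝ) :
    ∫⁻ y, tiltedHeatKSq l s y
      = ENNReal.ofReal (1 / (2 * √(π * s))) * ENNReal.ofReal (exp (-(l * s))) := by
  simp only [tiltedHeatKSq]
  rw [lintegral_mul_const _ (by fun_prop), lintegral_heatK_sq]

lemma ofReal_rhoN_sq_le {n : ℕ} {l : ℝ} (hl : 0 ≤ l) (q : (Fin n → ℝ) × (Fin n → ℝ)) :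
    ENNReal.ofReal (rhoN n q ^ 2) ≤
      ENNReal.ofReal (exp l) * ∏ j, tiltedHeatKSq l (q.1 j - prev q.1 j) (q.2 j - prev q.2 j) := by
  obtain ⟨t, x⟩ := q
  simp only [tiltedHeatKSq, ← ENNReal.ofReal_mul (sq_nonneg _)]
  rw [← ENNReal.ofReal_prod_of_nonneg fun j _ => by positivity,
    ← ENNReal.ofReal_mul (exp_pos l).le]
  refine ENNReal.ofReal_le_ofReal ?_
  by_cases hsimplex : (∀ j, 0 < t j ∧ t j ≤ 1) ∧ StrictMono t
  · have hsum := sum_sub_prev_le_one fun j => (hsimplex.1 j).2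
    rw [Finset.prod_mul_distrib, ← Real.exp_sum, ← mul_assoc, mul_comm (exp l), mul_assoc,
      ← Real.exp_add, rhoN, indi, if_pos hsimplex, one_mul, ← Finset.prod_pow]
    refine le_mul_of_one_le_right (by positivity) (one_le_exp ?_)
    rw [Finset.sum_neg_distrib, ← Finset.mul_sum]
    nlinarith
  · rw [rhoN, indi, if_neg hsimplex, zero_mul, zero_pow two_ne_zero]
    positivity

lemma lintegral_rhoN_sq_le (n : ℕ) {l : ℝ} (hl : 0 < l) :
    ∫⁻ q, ENNReal.ofReal (rhoN n q ^ 2)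
      ≤ ENNReal.ofReal (exp l) * ENNReal.ofReal (1 / (2 * √l)) ^ n := by
  calc ∫⁻ q, ENNReal.ofReal (rhoN n q ^ 2)
      ≤ ∫⁻ q : (Fin n → ℝ) × (Fin n → ℝ), ENNReal.ofReal (exp l) *
          ∏ j, tiltedHeatKSq l (q.1 j - prev q.1 j) (q.2 j - prev q.2 j) :=
        lintegral_mono (ofReal_rhoN_sq_le hl.le)
    _ = ENNReal.ofReal (exp l) *
          ∫⁻ t, ∫⁻ x, ∏ j, tiltedHeatKSq l (t j - prev t j) (x j - prev x j) := by
        rw [lintegral_const_mul _ (by fun_prop), Measure.volume_eq_prod,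
          lintegral_prod _ (by fun_prop)]
    _ = ENNReal.ofReal (exp l) * ENNReal.ofReal (1 / (2 * √l)) ^ n := by
        simp_rw [fun t : Fin n → ℝ => lintegral_prod_sub_prev
          (fun j => tiltedHeatKSq l (t j - prev t j)) fun j => by fun_prop,
          lintegral_tiltedHeatKSq]
        rw [lintegral_prod_sub_prev (fun _ s => ENNReal.ofReal (1 / (2 * √(π * s))) *
            ENNReal.ofReal (exp (-(l * s)))) fun _ => by fun_prop,
          lintegral_inv_sqrt_mul_exp hl,
          Finset.prod_const, Finset.card_univ, Fintype.card_fin]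

lemma measurable_rhoN (n : ℕ) : Measurable (rhoN n) := by
  unfold rhoN indi
  refine Measurable.mul (Measurable.ite ?_ measurable_const measurable_const) (by fun_prop)
  simp only [StrictMono]
  measurability

lemma integrable_rhoN_sq (n : ℕ) : Integrable fun q => rhoN n q ^ 2 := by
  refine ⟨(measurable_rhoN n).pow_const 2 |>.aestronglyMeasurable, ?_⟩
  rw [hasFiniteIntegral_iff_ofReal (ae_of_all _ fun q => sq_nonneg _)]
  exact (lintegral_rhoN_sq_le n one_pos).trans_lt (by finiteness)

lemma integral_rhoN_sq_le (n : ℕ) {l : ℝ} (hl : 0 < l) :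
    ∫ q, rhoN n q ^ 2 ≤ exp l * (1 / (2 * √l)) ^ n := by
  rw [integral_eq_lintegral_of_nonneg_ae (ae_of_all _ fun q => sq_nonneg _)
    ((measurable_rhoN n).pow_const 2).aestronglyMeasurable]
  refine ENNReal.toReal_le_of_le_ofReal (by positivity) ?_
  rw [ENNReal.ofReal_mul (exp_pos l).le, ENNReal.ofReal_pow (by positivity)]
  exact lintegral_rhoN_sq_le n hl

lemma sq_prod_mul_rhoN_le {n : ℕ} {a : ℝ × ℝ → ℝ} {C : ℝ} (ha : ∀ q, |a q| ≤ C)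
    (q : (Fin n → ℝ) × (Fin n → ℝ)) :
    ((∏ j, a (q.1 j, q.2 j)) * rhoN n q) ^ 2 ≤ (C ^ 2) ^ n * rhoN n q ^ 2 := by
  have hprod : |∏ j, a (q.1 j, q.2 j)| ≤ C ^ n := by
    rw [Finset.abs_prod]
    calc ∏ j, |a (q.1 j, q.2 j)| ≤ ∏ _j : Fin n, C :=
          Finset.prod_le_prod (fun j _ => abs_nonneg _) fun j _ => ha _
      _ = C ^ n := by simp
  rw [mul_pow, ← pow_mul, mul_comm 2, pow_mul]
  exact mul_le_mul_of_nonneg_right (sq_le_sq' (abs_le.1 hprod).1 (abs_le.1 hprod).2)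
    (sq_nonneg _)

lemma setIntegral_sq_prod_mul_rhoN_le {n : ℕ} {a : ℝ × ℝ → ℝ} {C : ℝ} (ha : ∀ q, |a q| ≤ C)
    {l : ℝ} (hl : 0 < l) (S : Set ((Fin n → ℝ) × (Fin n → ℝ))) :
    ∫ q in S, ((∏ j, a (q.1 j, q.2 j)) * rhoN n q) ^ 2 ≤ exp l * (C ^ 2 / (2 * √l)) ^ n := by
  have hint := (integrable_rhoN_sq n).const_mul ((C ^ 2) ^ n)
  calc ∫ q in S, ((∏ j, a (q.1 j, q.2 j)) * rhoN n q) ^ 2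
      ≤ ∫ q in S, (C ^ 2) ^ n * rhoN n q ^ 2 :=
        integral_mono_of_nonneg (ae_of_all _ fun q => sq_nonneg _) hint.integrableOn
          (ae_of_all _ (sq_prod_mul_rhoN_le ha))
    _ ≤ ∫ q, (C ^ 2) ^ n * rhoN n q ^ 2 :=
        setIntegral_le_integral hint (ae_of_all _ fun q => by positivity)
    _ ≤ (C ^ 2) ^ n * (exp l * (1 / (2 * √l)) ^ n) := by
        rw [integral_const_mul]
        gcongr
        exact integral_rhoN_sq_le n hl
    _ = exp l * (C ^ 2 / (2 * √l)) ^ n := by ring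

lemma summable_setIntegral_sq_prod_mul_rhoN {a : ℝ × ℝ → ℝ} {C : ℝ} (ha : ∀ q, |a q| ≤ C)
    (S : ∀ n, Set ((Fin n → ℝ) × (Fin n → ℝ))) :
    Summable fun n => ∫ q in S n, ((∏ j, a (q.1 j, q.2 j)) * rhoN n q) ^ 2 := by
  set l := (C ^ 2 + 1) ^ 2
  have hl : √l = C ^ 2 + 1 := sqrt_sq (by positivity)
  have hratio : C ^ 2 / (2 * √l) < 1 := by
    rw [hl, div_lt_one (by positivity)]
    nlinarith [sq_nonneg C]
  refine Summable.of_nonneg_of_le (fun n => integral_nonneg fun q => sq_nonneg _)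
    (fun n => setIntegral_sq_prod_mul_rhoN_le ha (by positivity) (S n))
    ((summable_geometric_of_lt_one (by positivity) hratio).mul_left (exp l))

theorem statement7_general (a : ℝ × ℝ → ℝ) (C : ℝ) (ha : ∀ q, |a q| ≤ C) :
    Summable (fun n : ℕ =>
      ∫ q in ((Set.univ.pi fun _ : Fin (n + 1) => Set.Icc (0 : ℝ) 1) ×ˢ
          (Set.univ : Set (Fin (n + 1) → ℝ))),
        ((∏ j, a (q.1 j, q.2 j)) * rhoN (n + 1) q) ^ 2)
    ∧ ∀ β : ℝ, 0 ≤ β →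
      Summable (fun n : ℕ => β ^ (2 * (n + 1)) *
        ∫ q in ((Set.univ.pi fun _ : Fin (n + 1) => Set.Icc (0 : ℝ) 1) ×ˢ
            (Set.univ : Set (Fin (n + 1) → ℝ))), (rhoN (n + 1) q) ^ 2) := by
  set S : ∀ n, Set ((Fin n → ℝ) × (Fin n → ℝ)) := fun n =>
    (Set.univ.pi fun _ => Set.Icc 0 1) ×ˢ Set.univ
  refine ⟨(summable_nat_add_iff 1).2 (summable_setIntegral_sq_prod_mul_rhoN ha S),
    fun β _ => ?_⟩
  refine ((summable_nat_add_iff 1).2 (summable_setIntegral_sq_prod_mul_rhoN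
    (a := fun _ => β) (C := |β|) (fun _ => le_rfl) S)).congr fun n => ?_
  simp only [Finset.prod_const, Finset.card_univ, Fintype.card_fin, mul_pow, ← pow_mul,
    mul_comm 2]
  exact integral_const_mul _ _

/-- For every bounded measurable `a : [0,1] × ℝ → ℝ`, the series
`∑_{n≥1} ‖a^{⊗n} ϱ_n‖₂²` converges; in particular `∑_{n≥1} β^{2n} ‖ϱ_n‖₂² < ∞` for every
`β ≥ 0`. -/
theorem statement7 (a : ℝ × ℝ → ℝ) (hameas : Measurable a) (C : ℝ) (ha : ∀ q, |a q| ≤ C) :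
    Summable (fun n : ℕ =>
      ∫ q in ((Set.univ.pi fun _ : Fin (n + 1) => Set.Icc (0 : ℝ) 1) ×ˢ
          (Set.univ : Set (Fin (n + 1) → ℝ))),
        ((∏ j, a (q.1 j, q.2 j)) * rhoN (n + 1) q) ^ 2)
    ∧ ∀ β : ℝ, 0 ≤ β →
      Summable (fun n : ℕ => β ^ (2 * (n + 1)) *
        ∫ q in ((Set.univ.pi fun _ : Fin (n + 1) => Set.Icc (0 : ℝ) 1) ×ˢ
            (Set.univ : Set (Fin (n + 1) → ℝ))), (rhoN (n + 1) q) ^ 2) :=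
  statement7_general a C ha
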